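/- arXiv:0901.1312 — 2 statements merged into one kernel-verified Lean document; each statement's English description precedes it below -/
import Mathlib

section
/- Let V(Q) = (1/2)Σ_f Σ_{n∈R(f)} (Q^f_n)². If queues evolve as Q^f_n[t+1] = Q^f_n[t] − π_out(f,n)[t] + π_in(f,n)[t] + u^f_n[t] with u^f_n[t] = max(0, π_out(f,n)[t] − Q^f_n[t]), and all π's are bounded by c_max, then the one-step drift satisfies ΔV[t] ≤ B + Σ_f Q^f_{b(f)}[t] λ_f − Σ_{(n,m)} π*_{nm}[t] max_{f:(n,m)∈L(f)} (Q^f_n[t] − Q^f_m[t])⁺, where B = b|F|K_max for a constant b depending only on c_max. -/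
/-!
A queue receiving at most `c_max` and serving at most `c_max` per slot satisfies
`(Q'² − Q²)/2 ≤ c_max² + Q (π_in − π_out)`. Summed along a route, the relay relation
(what enters hop `k + 1` is what hop `k` actually forwarded, `π_out − u`, with `u ≥ 0`)
lets the inflow of every hop but the source be paid by the outflow of its predecessor, so the
sum is at most the exogenous arrival term `Q_{b(f)} π_in` minus the differential backlogs
`∑ (Q_n − Q_m) π_out` over the links of the route. The back-pressure identity turns the latter,
summed over flows, into `∑ π*_{nm} w_{nm}`; taking expectations gives the bound with
`b = 2 c_max²`, because a route has at most `K_max + 1 ≤ 2 K_max` nodes.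
-/

open Finset MeasureTheory

noncomputable def lyapunov {F Node : Type*} [Fintype F] [DecidableEq Node]
    (route : F → List Node) (Q : F → Node → ℝ) : ℝ :=
  (1 / 2 : ℝ) * ∑ f, ∑ n ∈ (route f).toFinset, Q f n ^ 2

section QueueUpdate

variable {c q s a : ℝ}

lemma queue_update_eq : q - s + a + max (s - q) 0 = max (q - s) 0 + a := by
  rcases le_total s q with h | h
  · rw [max_eq_right (by linarith), max_eq_left (by linarith)]; ring
  · rw [max_eq_left (by linarith), max_eq_right (by linarith)]; ring

lemma queue_update_mem_Icc (hq : 0 ≤ q) (hs0 : 0 ≤ s) (ha0 : 0 ≤ a) (ha : a ≤ c) :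
    q - s + a + max (s - q) 0 ∈ Set.Icc 0 (q + c) := by
  rw [queue_update_eq]
  exact ⟨by positivity, add_le_add (max_le (by linarith) hq) ha⟩

lemma half_sq_queue_update_sub_le (hq : 0 ≤ q) (hs0 : 0 ≤ s) (hs : s ≤ c)
    (ha0 : 0 ≤ a) (ha : a ≤ c) :
    (1 / 2 : ℝ) * ((q - s + a + max (s - q) 0) ^ 2 - q ^ 2) ≤ c ^ 2 + q * (a - s) := by
  rw [queue_update_eq]
  rcases le_total s q with h | h
  · rw [max_eq_left (by linarith)]
    nlinarith [mul_nonneg (sub_nonneg.2 hs) (sub_nonneg.2 ha), mul_nonneg hs0 ha0]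
  · rw [max_eq_right (by linarith)]
    nlinarith [mul_le_mul h hs hs0 hs0, mul_le_mul_of_nonneg_right hs (hs0.trans hs),
      mul_nonneg hq ha0]

end QueueUpdate

lemma sum_backlog_mul_net_flow_le {α : Type*} {Q πin πout u : α → ℝ}
    (hQ : ∀ n, 0 ≤ Q n) (hu : ∀ n, 0 ≤ u n) (hout : ∀ n, 0 ≤ πout n) :
    ∀ (l : List α) (hl : l ≠ []),
      (∀ (k : ℕ) (h : k + 1 < l.length),
        πin l[k + 1] = πout (l[k]'(Nat.lt_of_succ_lt h)) - u (l[k]'(Nat.lt_of_succ_lt h))) →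
      (l.map fun n => Q n * (πin n - πout n)).sum ≤
        Q (l.head hl) * πin (l.head hl) -
          ((l.zip l.tail).map fun nm => (Q nm.1 - Q nm.2) * πout nm.1).sum
  | [n], _, _ => by
    simp only [List.map_cons, List.map_nil, List.sum_cons, List.sum_nil, List.head_cons,
      List.tail_cons, List.zip_nil_right]
    nlinarith [mul_nonneg (hQ n) (hout n)]
  | n :: m :: l, _, relay => by
    have hm : πin m = πout n - u n := relay 0 (by simp)
    have ih := sum_backlog_mul_net_flow_le hQ hu hout (m :: l) (List.cons_ne_nil _ _)
      fun k h => relay (k + 1) (by simpa using h)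
    simp only [List.map_cons, List.sum_cons, List.tail_cons, List.head_cons,
      List.zip_cons_cons] at ih ⊢
    rw [hm] at ih ⊢
    nlinarith [mul_nonneg (hQ m) (hu n)]

lemma sum_route_half_sq_queue_update_sub_le {α : Type*} [DecidableEq α] {c : ℝ} {l : List α}
    (hl : l ≠ []) (hnd : l.Nodup) {Q πin πout u : α → ℝ} (hQ : ∀ n, 0 ≤ Q n)
    (hout0 : ∀ n, 0 ≤ πout n) (houtc : ∀ n, πout n ≤ c)
    (hin0 : ∀ n, 0 ≤ πin n) (hinc : ∀ n, πin n ≤ c)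
    (hu : ∀ n, u n = max (πout n - Q n) 0)
    (relay : ∀ (k : ℕ) (h : k + 1 < l.length),
      πin l[k + 1] = πout (l[k]'(Nat.lt_of_succ_lt h)) - u (l[k]'(Nat.lt_of_succ_lt h))) :
    ∑ n ∈ l.toFinset, (1 / 2 : ℝ) * ((Q n - πout n + πin n + u n) ^ 2 - Q n ^ 2) ≤
      l.length * c ^ 2 + (Q (l.head hl) * πin (l.head hl) -
        ((l.zip l.tail).map fun nm => (Q nm.1 - Q nm.2) * πout nm.1).sum) := by
  have hu0 (n : α) : 0 ≤ u n := hu n ▸ le_max_right _ _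
  calc ∑ n ∈ l.toFinset, (1 / 2 : ℝ) * ((Q n - πout n + πin n + u n) ^ 2 - Q n ^ 2)
      ≤ ∑ n ∈ l.toFinset, (c ^ 2 + Q n * (πin n - πout n)) := by
        gcongr with n
        rw [hu]
        exact half_sq_queue_update_sub_le (hQ n) (hout0 n) (houtc n) (hin0 n) (hinc n)
    _ = l.length * c ^ 2 + (l.map fun n => Q n * (πin n - πout n)).sum := by
        rw [sum_add_distrib, sum_const, nsmul_eq_mul, List.toFinset_card_of_nodup hnd,
          List.sum_toFinset _ hnd]
    _ ≤ _ := by grw [sum_backlog_mul_net_flow_le hQ hu0 hout0 l hl relay]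

lemma lyapunov_queue_update_sub_le {F Node : Type*} [Fintype F] [DecidableEq Node] {c : ℝ}
    {L : ℕ} {route : F → List Node} (hne : ∀ f, route f ≠ []) (hnd : ∀ f, (route f).Nodup)
    (hlen : ∀ f, (route f).length ≤ L) {Q πin πout u Q' : F → Node → ℝ}
    (hQ : ∀ f n, 0 ≤ Q f n) (hout0 : ∀ f n, 0 ≤ πout f n) (houtc : ∀ f n, πout f n ≤ c)
    (hin0 : ∀ f n, 0 ≤ πin f n) (hinc : ∀ f n, πin f n ≤ c)
    (hu : ∀ f n, u f n = max (πout f n - Q f n) 0)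
    (hQ' : ∀ f n, Q' f n = Q f n - πout f n + πin f n + u f n)
    (relay : ∀ f (k : ℕ) (h : k + 1 < (route f).length),
      πin f ((route f)[k + 1]'h) =
        πout f ((route f)[k]'(Nat.lt_of_succ_lt h)) -
          u f ((route f)[k]'(Nat.lt_of_succ_lt h))) :
    lyapunov route Q' - lyapunov route Q ≤
      Fintype.card F * L * c ^ 2 +
        ∑ f, Q f ((route f).head (hne f)) * πin f ((route f).head (hne f)) -
        ∑ f, (((route f).zip (route f).tail).map
          fun nm => (Q f nm.1 - Q f nm.2) * πout f nm.1).sum := by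
  have hroute (f : F) := sum_route_half_sq_queue_update_sub_le (hne f) (hnd f) (hQ f) (hout0 f)
    (houtc f) (hin0 f) (hinc f) (hu f) (relay f)
  have hL (f : F) : ((route f).length : ℝ) * c ^ 2 ≤ L * c ^ 2 := by
    gcongr; exact_mod_cast hlen f
  calc lyapunov route Q' - lyapunov route Q
      = ∑ f, ∑ n ∈ (route f).toFinset, (1 / 2 : ℝ) * ((Q' f n) ^ 2 - Q f n ^ 2) := by
        simp only [lyapunov, mul_sum, mul_sub, ← sum_sub_distrib]
    _ ≤ ∑ f, (L * c ^ 2 + (Q f ((route f).head (hne f)) * πin f ((route f).head (hne f)) -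
          (((route f).zip (route f).tail).map
            fun nm => (Q f nm.1 - Q f nm.2) * πout f nm.1).sum)) := by
        gcongr with f
        simp only [hQ']
        exact (hroute f).trans (by grw [hL f])
    _ = _ := by
        rw [sum_add_distrib, sum_sub_distrib, sum_const, card_univ, nsmul_eq_mul]; ring

section Expectation

variable {Ω : Type*} [MeasurableSpace Ω] {μ : Measure Ω}

lemma integrable_lyapunov {F Node : Type*} [Fintype F] [DecidableEq Node]
    (route : F → List Node) {X : Ω → F → Node → ℝ}
    (hX : ∀ f n, Integrable (fun ω => X ω f n ^ 2) μ) :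
    Integrable (fun ω => lyapunov route (X ω)) μ :=
  (integrable_finsetSum _ fun f _ => integrable_finsetSum _ fun n _ => hX f n).const_mul _

lemma integrable_sq_queue_update [IsFiniteMeasure μ] {c q : ℝ} {s a : Ω → ℝ} (hq : 0 ≤ q)
    (hs : Measurable s) (ha : Measurable a) (hs0 : ∀ ω, 0 ≤ s ω) (ha0 : ∀ ω, 0 ≤ a ω)
    (hac : ∀ ω, a ω ≤ c) :
    Integrable (fun ω => (q - s ω + a ω + max (s ω - q) 0) ^ 2) μ := by
  refine .of_mem_Icc 0 ((q + c) ^ 2) (by fun_prop) (ae_of_all _ fun ω => ?_)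
  have h := queue_update_mem_Icc hq (hs0 ω) (ha0 ω) (hac ω)
  exact ⟨sq_nonneg _, pow_le_pow_left₀ h.1 h.2 2⟩

section Affine

variable {ι κ : Type*} [Fintype ι] [Fintype κ] (C : ℝ) (a : ι → ℝ) (b : κ → ℝ)
  {X : ι → Ω → ℝ} {Y : κ → Ω → ℝ}

lemma integrable_const_add_sum_mul_sub_sum_mul [IsFiniteMeasure μ]
    (hX : ∀ i, Integrable (X i) μ) (hY : ∀ j, Integrable (Y j) μ) :
    Integrable (fun ω => C + ∑ i, a i * X i ω - ∑ j, Y j ω * b j) μ :=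
  ((integrable_const C).add (integrable_finsetSum _ fun i _ => (hX i).const_mul _)).sub
    (integrable_finsetSum _ fun j _ => (hY j).mul_const _)

lemma integral_const_add_sum_mul_sub_sum_mul [IsProbabilityMeasure μ]
    (hX : ∀ i, Integrable (X i) μ) (hY : ∀ j, Integrable (Y j) μ) :
    ∫ ω, (C + ∑ i, a i * X i ω - ∑ j, Y j ω * b j) ∂μ =
      C + ∑ i, a i * ∫ ω, X i ω ∂μ - ∑ j, (∫ ω, Y j ω ∂μ) * b j := by
  have hX' : Integrable (fun ω => ∑ i, a i * X i ω) μ :=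
    integrable_finsetSum _ fun i _ => (hX i).const_mul _
  have hCX : Integrable (fun ω => C + ∑ i, a i * X i ω) μ := (integrable_const C).add hX'
  rw [integral_sub hCX (integrable_finsetSum _ fun j _ => (hY j).mul_const _),
    integral_add (integrable_const C) hX', integral_const, probReal_univ, one_smul,
    integral_finsetSum _ fun i _ => (hX i).const_mul _,
    integral_finsetSum _ fun j _ => (hY j).mul_const _]
  simp only [integral_const_mul, integral_mul_const]

end Affine

end Expectation
/-- One-step Lyapunov drift bound for back-pressure scheduling with fixed
routes: there is a constant `b` depending only on `c_max` such that, for any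
network (flows `F` with routes of at most `K_max` links, current queue state
`Q`, service/arrival variables bounded by `c_max`, queue update
`Q' = Q − π_out + π_in + u`, relay relation `π_in = π_out(prev) − u(prev)`, mean
arrival rate `λ_f` at the source, and back-pressure schedule `π*`),
`E[V(Q') − V(Q)] ≤ b·|F|·K_max + ∑_f Q^f_{b(f)} λ_f
  − ∑_{(n,m)} E[π*_{nm}]·max_{f:(n,m)∈L(f)} (Q^f_n − Q^f_m)⁺`. -/
theorem stmt_7 (c_max : ℝ) (hc : 0 < c_max) :
    ∃ b : ℝ, 0 < b ∧
    ∀ (F Node : Type) (_ : Fintype F) (_ : DecidableEq F)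
      (_ : Fintype Node) (_ : DecidableEq Node)
      (route : F → List Node) (hne : ∀ f, route f ≠ [])
      (_ : ∀ f, (route f).Nodup)
      (Kmax : ℕ) (_ : 1 ≤ Kmax) (_ : ∀ f, (route f).length ≤ Kmax + 1)
      (Ω : Type) (m0 : MeasurableSpace Ω) (μ : Measure Ω)
      (_ : IsProbabilityMeasure μ)
      (Q : F → Node → ℝ) (_ : ∀ f n, 0 ≤ Q f n)
      (πout πin : F → Node → Ω → ℝ) (πstar : Node × Node → Ω → ℝ)
      (_ : ∀ f n, Measurable (πout f n)) (_ : ∀ f n, Measurable (πin f n))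
      (_ : ∀ nm, Measurable (πstar nm))
      (_ : ∀ f n ω, 0 ≤ πout f n ω) (_ : ∀ f n ω, πout f n ω ≤ c_max)
      (_ : ∀ f n ω, 0 ≤ πin f n ω) (_ : ∀ f n ω, πin f n ω ≤ c_max)
      (_ : ∀ nm ω, 0 ≤ πstar nm ω) (_ : ∀ nm ω, πstar nm ω ≤ c_max)
      -- unused-service terms
      (u : F → Node → Ω → ℝ)
      (_ : ∀ f n ω, u f n ω = max (πout f n ω - Q f n) 0)
      -- queue update
      (Q' : Ω → F → Node → ℝ)
      (_ : ∀ ω f n, Q' ω f n = Q f n - πout f n ω + πin f n ω + u f n ω)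
      -- relay relation along each route: π_in at hop k+1 equals the packets
      (_ : ∀ f (k : ℕ) (h : k + 1 < (route f).length) (ω : Ω),
        πin f ((route f)[k + 1]'h) ω =
          πout f ((route f)[k]'(Nat.lt_of_succ_lt h)) ω -
            u f ((route f)[k]'(Nat.lt_of_succ_lt h)) ω)
      -- mean arrival rates at sources
      (lam : F → ℝ) (_ : ∀ f, 0 ≤ lam f)
      (_ : ∀ f, ∫ ω, πin f ((route f).head (hne f)) ω ∂μ = lam f)
      -- max differential backlog weights
      (w : Node × Node → ℝ)
      (_ : ∀ nm, w nm =
        (univ.filter (fun f => nm ∈ (route f).zip (route f).tail)).fold max 0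
          (fun f => max (Q f nm.1 - Q f nm.2) 0))
      -- back-pressure scheduling identity
      (_ : ∀ ω : Ω,
        ∑ f, (((route f).zip (route f).tail).map
            (fun nm => (Q f nm.1 - Q f nm.2) * πout f nm.1 ω)).sum =
          ∑ nm : Node × Node, πstar nm ω * w nm),
      ∫ ω, ((1 / 2 : ℝ) * ∑ f, ∑ n ∈ (route f).toFinset, Q' ω f n ^ 2 -
              (1 / 2 : ℝ) * ∑ f, ∑ n ∈ (route f).toFinset, Q f n ^ 2) ∂μ ≤
        b * (Fintype.card F) * Kmax + ∑ f, Q f ((route f).head (hne f)) * lam f -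
          ∑ nm : Node × Node, (∫ ω, πstar nm ω ∂μ) * w nm := by
  refine ⟨2 * c_max ^ 2, by positivity, ?_⟩
  intro F Node _ _ _ _ route hne hnd Kmax hK hlen Ω _ μ _ Q hQ πout πin πstar hmout hmin hmstar
    hout0 houtc hin0 hinc hstar0 hstarc u hu Q' hQ' relay lam _ hmean w _ sched
  have hbound (ω : Ω) : lyapunov route (Q' ω) - lyapunov route Q ≤
      2 * c_max ^ 2 * Fintype.card F * Kmax +
        ∑ f, Q f ((route f).head (hne f)) * πin f ((route f).head (hne f)) ω -
        ∑ nm, πstar nm ω * w nm := by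
    have hK' : ((Kmax + 1 : ℕ) : ℝ) ≤ 2 * Kmax := by push_cast; exact_mod_cast by omega
    grw [lyapunov_queue_update_sub_le hne hnd hlen hQ (hout0 · · ω) (houtc · · ω) (hin0 · · ω)
      (hinc · · ω) (hu · · ω) (hQ' ω) (relay · · · ω), sched ω, hK']
    linarith
  have hbdd {X : Ω → ℝ} (hX : Measurable X) (h0 : ∀ ω, 0 ≤ X ω) (hc : ∀ ω, X ω ≤ c_max) :
      Integrable X μ :=
    .of_mem_Icc 0 c_max hX.aemeasurable (ae_of_all _ fun ω => ⟨h0 ω, hc ω⟩)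
  have hin (f : F) (n : Node) : Integrable (πin f n) μ := hbdd (hmin f n) (hin0 f n) (hinc f n)
  have hstar (nm : Node × Node) : Integrable (πstar nm) μ :=
    hbdd (hmstar nm) (hstar0 nm) (hstarc nm)
  have hQ'sq (f : F) (n : Node) : Integrable (fun ω => Q' ω f n ^ 2) μ := by
    simp only [hQ', hu]
    exact integrable_sq_queue_update (hQ f n) (hmout f n) (hmin f n) (hout0 f n) (hin0 f n)
      (hinc f n)
  calc ∫ ω, (lyapunov route (Q' ω) - lyapunov route Q) ∂μ
      ≤ ∫ ω, (2 * c_max ^ 2 * Fintype.card F * Kmax +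
          ∑ f, Q f ((route f).head (hne f)) * πin f ((route f).head (hne f)) ω -
          ∑ nm, πstar nm ω * w nm) ∂μ :=
        integral_mono ((integrable_lyapunov route hQ'sq).sub (integrable_const _))
          (integrable_const_add_sum_mul_sub_sum_mul _ _ _ (fun f => hin f _) hstar) hbound
    _ = _ := by
        rw [integral_const_add_sum_mul_sub_sum_mul _ _ _ (fun f => hin f _) hstar]
        simp only [hmean]
end

section
/- If (1+ε)λ lies in the capacity region, i.e., there exists μ ∈ co(Γ) with μ_{nm} ≥ (1+ε)Σ_{f:(n,m)∈L(f)} λ_f for every link (n,m), then for every queue state Q, Σ_f Q^f_{b(f)} λ_f ≤ (1/(1+ε)) Σ_{(n,m)} μ_{nm} max_{f:(n,m)∈L(f)} (Q^f_n − Q^f_m)⁺. -/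
open Finset

/-!
Along a route `b(f) = n₀, n₁, …, n_k = e(f)` the backlog telescopes,
`Q^f_{b(f)} = ∑ᵢ (Q^f_{nᵢ} - Q^f_{nᵢ₊₁}) ≤ ∑ᵢ (Q^f_{nᵢ} - Q^f_{nᵢ₊₁})⁺`,
and each positive part is at most the link's maximal differential backlog `M_{nm}`.
Exchanging the sums over flows and links bounds `∑_f Q^f_{b(f)} λ_f` by
`∑_{nm} M_{nm} · (load of nm)`, and the capacity condition bounds each load
by `μ_{nm} / (1 + ε)`.
-/

namespace List

variable {α : Type*}

theorem sum_map_consecutivePairs_sub {G : Type*} [AddCommGroup G] (g : α → G) :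
    ∀ (l : List α) (h : l ≠ []),
      (l.consecutivePairs.map fun p => g p.1 - g p.2).sum = g (l.head h) - g (l.getLast h)
  | [], h => absurd rfl h
  | [_], _ => by simp [consecutivePairs]
  | a :: b :: t, _ => by
    have hcons : (a :: b :: t).consecutivePairs = (a, b) :: (b :: t).consecutivePairs := rfl
    rw [hcons, map_cons, sum_cons, sum_map_consecutivePairs_sub g (b :: t) (cons_ne_nil b t),
      head_cons, head_cons, getLast_cons_cons, sub_add_sub_cancel]

theorem Nodup.consecutivePairs : ∀ {l : List α}, l.Nodup → l.consecutivePairs.Nodup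
  | [], _ => nodup_nil
  | [_], _ => nodup_nil
  | a :: b :: t, h => by
    have hcons : (a :: b :: t).consecutivePairs = (a, b) :: (b :: t).consecutivePairs := rfl
    rw [hcons, nodup_cons]
    exact ⟨fun hab => (nodup_cons.1 h).1 (of_mem_zip hab).1, h.of_cons.consecutivePairs⟩

theorem head_sub_getLast_le_sum_consecutivePairs_posPart [DecidableEq α] {G : Type*}
    [AddCommGroup G] [LinearOrder G] [IsOrderedAddMonoid G] (g : α → G) {l : List α}
    (h : l ≠ []) (hl : l.Nodup) :
    g (l.head h) - g (l.getLast h) ≤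
      ∑ p ∈ l.consecutivePairs.toFinset, max (g p.1 - g p.2) 0 := by
  rw [← sum_map_consecutivePairs_sub g l h, ← sum_toFinset _ hl.consecutivePairs]
  exact sum_le_sum fun _ _ => le_max_left _ _

end List

namespace Finset

theorem sum_sum_mul_le_sum_mul_sum_filter {ι κ R : Type*} [Fintype ι] [Fintype κ]
    [DecidableEq κ] [CommSemiring R] [PartialOrder R] [IsOrderedRing R] (s : ι → Finset κ)
    (w : ι → κ → R) (c : ι → R) (hc : ∀ i, 0 ≤ c i) (M : κ → R)
    (hM : ∀ i, ∀ k ∈ s i, w i k ≤ M k) :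
    ∑ i, ∑ k ∈ s i, w i k * c i ≤ ∑ k, M k * ∑ i with k ∈ s i, c i :=
  calc ∑ i, ∑ k ∈ s i, w i k * c i
      ≤ ∑ i, ∑ k ∈ s i, M k * c i :=
        sum_le_sum fun i _ => sum_le_sum fun k hk =>
          mul_le_mul_of_nonneg_right (hM i k hk) (hc i)
    _ = ∑ k, ∑ i with k ∈ s i, M k * c i := sum_comm' (by simp)
    _ = ∑ k, M k * ∑ i with k ∈ s i, c i := by simp_rw [mul_sum]

end Finset

theorem stmt_8_general {F Node : Type*} [Fintype F] [DecidableEq F]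
    [Fintype Node] [DecidableEq Node]
    (route : F → List Node) (hne : ∀ f, route f ≠ [])
    (hnodup : ∀ f, (route f).Nodup)
    (lam : F → ℝ) (hlam : ∀ f, 0 ≤ lam f) (ε : ℝ) (hε : 0 < ε)
    (Q : F → Node → ℝ)
    (hdest : ∀ f, Q f ((route f).getLast (hne f)) = 0)
    (μ : Node × Node → ℝ)
    (hcap : ∀ nm : Node × Node,
      (1 + ε) * ∑ f ∈ univ.filter (fun f => nm ∈ (route f).zip (route f).tail),
        lam f ≤ μ nm) :
    ∑ f, Q f ((route f).head (hne f)) * lam f ≤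
      (1 / (1 + ε)) * ∑ nm : Node × Node, μ nm *
        (univ.filter (fun f => nm ∈ (route f).zip (route f).tail)).fold max 0
          (fun f => max (Q f nm.1 - Q f nm.2) 0) := by
  set links : F → Finset (Node × Node) := fun f => (route f).consecutivePairs.toFinset
  have hlinks : ∀ f nm, nm ∈ links f ↔ nm ∈ (route f).zip (route f).tail :=
    fun _ _ => List.mem_toFinset
  set M : Node × Node → ℝ := fun nm =>
    (univ.filter (fun f => nm ∈ (route f).zip (route f).tail)).fold max 0
      (fun f => max (Q f nm.1 - Q f nm.2) 0)
  have hM : ∀ f, ∀ nm ∈ links f, max (Q f nm.1 - Q f nm.2) 0 ≤ M nm := fun f nm hnm =>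
    (le_fold_max _).2 (Or.inr ⟨f, mem_filter.2 ⟨mem_univ f, (hlinks f nm).1 hnm⟩, le_rfl⟩)
  have hM0 : ∀ nm, 0 ≤ M nm := fun _ => (le_fold_max _).2 (Or.inl le_rfl)
  have hε' : (0 : ℝ) < 1 + ε := by linarith
  calc ∑ f, Q f ((route f).head (hne f)) * lam f
      ≤ ∑ f, ∑ nm ∈ links f, max (Q f nm.1 - Q f nm.2) 0 * lam f := by
        refine sum_le_sum fun f _ => ?_
        rw [← sum_mul]
        refine mul_le_mul_of_nonneg_right ?_ (hlam f)
        simpa [hdest f] using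
          List.head_sub_getLast_le_sum_consecutivePairs_posPart (Q f) (hne f) (hnodup f)
    _ ≤ ∑ nm, M nm * ∑ f with nm ∈ links f, lam f :=
        sum_sum_mul_le_sum_mul_sum_filter links _ lam hlam M hM
    _ ≤ ∑ nm, M nm * (μ nm / (1 + ε)) := by
        gcongr with nm
        · exact hM0 nm
        rw [le_div_iff₀' hε']
        simpa only [hlinks] using hcap nm
    _ = 1 / (1 + ε) * ∑ nm, μ nm * M nm := by
        rw [mul_sum]
        exact sum_congr rfl fun nm _ => by ring

/-- If `(1+ε)λ` lies in the capacity region (there is `μ` with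
`μ_{nm} ≥ (1+ε)·∑_{f:(n,m)∈L(f)} λ_f` on every link), then for every queue
state `Q` (nonnegative, zero at each flow's destination),
`∑_f Q^f_{b(f)} λ_f ≤ (1/(1+ε)) ∑_{(n,m)} μ_{nm} max_{f:(n,m)∈L(f)} (Q^f_n − Q^f_m)⁺`. -/
theorem stmt_8 {F Node : Type*} [Fintype F] [DecidableEq F]
    [Fintype Node] [DecidableEq Node]
    (route : F → List Node) (hne : ∀ f, route f ≠ [])
    (hnodup : ∀ f, (route f).Nodup)
    (lam : F → ℝ) (hlam : ∀ f, 0 ≤ lam f) (ε : ℝ) (hε : 0 < ε)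
    (Q : F → Node → ℝ) (hQ : ∀ f n, 0 ≤ Q f n)
    (hdest : ∀ f, Q f ((route f).getLast (hne f)) = 0)
    (μ : Node × Node → ℝ)
    (hcap : ∀ nm : Node × Node,
      (1 + ε) * ∑ f ∈ univ.filter (fun f => nm ∈ (route f).zip (route f).tail),
        lam f ≤ μ nm) :
    ∑ f, Q f ((route f).head (hne f)) * lam f ≤
      (1 / (1 + ε)) * ∑ nm : Node × Node, μ nm *
        (univ.filter (fun f => nm ∈ (route f).zip (route f).tail)).fold max 0
          (fun f => max (Q f nm.1 - Q f nm.2) 0) :=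
  stmt_8_general route hne hnodup lam hlam ε hε Q hdest μ hcap
end
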